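/- Let ρ be a d×d density matrix and let Φ₁,…,Φ_N (N ≥ 2) be quantum channels on d×d matrices, where Φ_s has Kraus operators K₁ˢ,…,K_nˢ. Then for any permutations π₁,…,π_N of {1,…,n}, ∑_{s=1}^{N} I_ρ(Φ_s) ≥ (1/(2N−2)) { ∑_{1≤s<t≤N} ∑_{i=1}^{n} I_ρ(K^s_{π_s(i)} − K^t_{π_t(i)}) + (2/(N(N−1))) [ ∑_{1≤s<t≤N} √( ∑_{i=1}^{n} I_ρ(K^s_{π_s(i)} + K^t_{π_t(i)}) ) ]² }. -/

import Mathlib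

open Matrix Finset
open scoped ComplexOrder

/-- The former `Matrix.PosSemidef.sqrt` (removed from Mathlib), with its old definition. -/
noncomputable def psdSqrt {d : ℕ} {ρ : Matrix (Fin d) (Fin d) ℂ} (hρ : ρ.PosSemidef) :
    Matrix (Fin d) (Fin d) ℂ :=
  hρ.1.eigenvectorUnitary.1 * diagonal ((↑) ∘ (√·) ∘ hρ.1.eigenvalues) *
    (star hρ.1.eigenvectorUnitary : Matrix (Fin d) (Fin d) ℂ)

/-- Wigner–Yanase skew information `I_ρ(A) = (1/2) Tr([√ρ, A]† [√ρ, A])` of a matrix `A`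
with respect to a positive semidefinite matrix `ρ`, where `√ρ = hρ.sqrt` is the positive
semidefinite square root of `ρ`. -/
noncomputable def skewInfo {d : ℕ} {ρ : Matrix (Fin d) (Fin d) ℂ} (hρ : ρ.PosSemidef)
    (A : Matrix (Fin d) (Fin d) ℂ) : ℝ :=
  (1 / 2 : ℝ) *
    (((psdSqrt hρ * A - A * psdSqrt hρ)ᴴ * (psdSqrt hρ * A - A * psdSqrt hρ)).trace).re

/-! `A ↦ I_ρ(A)` is half the squared Frobenius norm of `[√ρ, A]`, so it is nonnegative and
satisfies the parallelogram law. Summed over the pairs `s < t` and over `i` (the permutations only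
reorder the sums `∑_i I_ρ(K^s_i)`), the law gives
`∑_{s<t} ∑_i I_ρ(K^s - K^t) + ∑_{s<t} ∑_i I_ρ(K^s + K^t) = (2N-2) ∑_s I_ρ(Φ_s)`, and Cauchy–Schwarz
over the `N(N-1)/2` pairs bounds the squared sum of square roots by `N(N-1)/2` times the second
sum. -/

section SkewInfo

variable {d : ℕ} {ρ : Matrix (Fin d) (Fin d) ℂ} (hρ : ρ.PosSemidef)

lemma skewInfo_nonneg (A : Matrix (Fin d) (Fin d) ℂ) : 0 ≤ skewInfo hρ A := by
  have h := (posSemidef_conjTranspose_mul_self (psdSqrt hρ * A - A * psdSqrt hρ)).trace_nonneg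
  unfold skewInfo
  have := (Complex.nonneg_iff.mp h).1
  positivity

lemma skewInfo_sub_add_skewInfo_add (A B : Matrix (Fin d) (Fin d) ℂ) :
    skewInfo hρ (A - B) + skewInfo hρ (A + B) = 2 * (skewInfo hρ A + skewInfo hρ B) := by
  unfold skewInfo
  set S := psdSqrt hρ
  have hsub : S * (A - B) - (A - B) * S = (S * A - A * S) - (S * B - B * S) := by noncomm_ring
  have hadd : S * (A + B) - (A + B) * S = (S * A - A * S) + (S * B - B * S) := by noncomm_ring
  rw [hsub, hadd]
  set X := S * A - A * S
  set Y := S * B - B * S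
  have parallelogram : (X - Y)ᴴ * (X - Y) + (X + Y)ᴴ * (X + Y) =
      (Xᴴ * X + Xᴴ * X) + (Yᴴ * Y + Yᴴ * Y) := by
    simp only [conjTranspose_sub, conjTranspose_add]
    noncomm_ring
  have h := congrArg (fun M => (trace M).re) parallelogram
  simp only [trace_add, Complex.add_re] at h
  linarith

lemma sum_skewInfo_sub_add_sum_skewInfo_add {ι : Type*} (s : Finset ι)
    (A B : ι → Matrix (Fin d) (Fin d) ℂ) :
    ∑ i ∈ s, skewInfo hρ (A i - B i) + ∑ i ∈ s, skewInfo hρ (A i + B i) =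
      2 * (∑ i ∈ s, skewInfo hρ (A i) + ∑ i ∈ s, skewInfo hρ (B i)) := by
  simp only [← sum_add_distrib, mul_sum, skewInfo_sub_add_skewInfo_add]

end SkewInfo

lemma Fin.sum_sum_Ioi_add {M : Type*} [AddCommMonoid M] {N : ℕ} (a : Fin N → M) :
    ∑ s, ∑ t ∈ Ioi s, (a s + a t) = (N - 1) • ∑ s, a s := by
  have hswap : ∑ s, ∑ t ∈ Ioi s, a t = ∑ t, ∑ _s ∈ Iio t, a t :=
    sum_comm' fun s t => by simp only [mem_univ, mem_Ioi, mem_Iio, true_and, and_true]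
  have hcard (s : Fin N) : #(Ioi s) + #(Iio s) = N - 1 := by
    rw [Fin.card_Ioi, Fin.card_Iio]
    omega
  simp only [sum_add_distrib]
  rw [hswap, smul_sum, ← sum_add_distrib]
  refine sum_congr rfl fun s _ => ?_
  rw [Finset.sum_const, Finset.sum_const, ← add_smul, hcard]

lemma Fin.two_mul_card_sigma_Ioi (N : ℕ) :
    2 * #(univ.sigma fun s : Fin N => Ioi s) = N * (N - 1) := by
  have h := Fin.sum_sum_Ioi_add (N := N) fun _ => 1
  simp only [Finset.sum_const, smul_eq_mul, mul_one] at h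
  rw [card_sigma, mul_sum, mul_comm N]
  simpa [mul_comm] using h

lemma sq_sum_sqrt_le_card_mul_sum {ι : Type*} (s : Finset ι) {f : ι → ℝ}
    (hf : ∀ i ∈ s, 0 ≤ f i) : (∑ i ∈ s, √(f i)) ^ 2 ≤ #s * ∑ i ∈ s, f i := by
  calc (∑ i ∈ s, √(f i)) ^ 2 ≤ #s * ∑ i ∈ s, √(f i) ^ 2 := sq_sum_le_card_mul_sum_sq
    _ = #s * ∑ i ∈ s, f i := by rw [sum_congr rfl fun i hi => Real.sq_sqrt (hf i hi)]

lemma Fin.two_mul_sq_sum_sum_Ioi_sqrt_le {N : ℕ} {f : Fin N → Fin N → ℝ}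
    (hf : ∀ s t, 0 ≤ f s t) :
    2 * (∑ s, ∑ t ∈ Ioi s, √(f s t)) ^ 2 ≤ N * (N - 1 : ℝ) * ∑ s, ∑ t ∈ Ioi s, f s t := by
  have hpairs : (2 * #(univ.sigma fun s : Fin N => Ioi s) : ℝ) = N * (N - 1 : ℝ) := by
    rcases Nat.eq_zero_or_pos N with rfl | hN
    · simp
    · have h := congrArg (Nat.cast (R := ℝ)) (Fin.two_mul_card_sigma_Ioi N)
      push_cast [Nat.cast_sub hN] at h
      exact h
  rw [sum_sigma', sum_sigma', ← hpairs, mul_assoc]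
  gcongr
  exact sq_sum_sqrt_le_card_mul_sum _ fun p _ => hf p.1 p.2

theorem stmt_2_general {d n N : ℕ} (hN : 2 ≤ N)
    (ρ : Matrix (Fin d) (Fin d) ℂ) (hρ : ρ.PosSemidef)
    (K : Fin N → Fin n → Matrix (Fin d) (Fin d) ℂ)
    (π : Fin N → Equiv.Perm (Fin n)) :
    ∑ s, ∑ i, skewInfo hρ (K s i) ≥
      (1 / (2 * (N : ℝ) - 2)) *
        ((∑ s : Fin N, ∑ t ∈ Finset.Ioi s, ∑ i, skewInfo hρ (K s (π s i) - K t (π t i)))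
          + (2 / ((N : ℝ) * ((N : ℝ) - 1))) *
            (∑ s : Fin N, ∑ t ∈ Finset.Ioi s,
              Real.sqrt (∑ i, skewInfo hρ (K s (π s i) + K t (π t i)))) ^ 2) := by
  set I : Fin N → ℝ := fun s => ∑ i, skewInfo hρ (K s i)
  set D : Fin N → Fin N → ℝ := fun s t => ∑ i, skewInfo hρ (K s (π s i) - K t (π t i))
  set P : Fin N → Fin N → ℝ := fun s t => ∑ i, skewInfo hρ (K s (π s i) + K t (π t i))
  have hpairs :
      ∑ s, ∑ t ∈ Ioi s, D s t + ∑ s, ∑ t ∈ Ioi s, P s t = (2 * N - 2 : ℝ) * ∑ s, I s := by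
    have hpair (s t : Fin N) : D s t + P s t = 2 * I s + 2 * I t := by
      simp only [D, P, I, sum_skewInfo_sub_add_sum_skewInfo_add,
        Equiv.sum_comp (π s) fun i => skewInfo hρ (K s i),
        Equiv.sum_comp (π t) fun i => skewInfo hρ (K t i)]
      ring
    simp only [← sum_add_distrib, hpair, Fin.sum_sum_Ioi_add fun s => 2 * I s, nsmul_eq_mul,
      ← mul_sum]
    push_cast [Nat.cast_sub (by omega : 1 ≤ N)]
    ring
  have hCS : 2 * (∑ s, ∑ t ∈ Ioi s, √(P s t)) ^ 2 ≤ N * (N - 1 : ℝ) * ∑ s, ∑ t ∈ Ioi s, P s t :=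
    Fin.two_mul_sq_sum_sum_Ioi_sqrt_le fun s t => sum_nonneg fun i _ => skewInfo_nonneg hρ _
  have hN' : (2 : ℝ) ≤ N := by exact_mod_cast hN
  have hpos : (0 : ℝ) < 2 * N - 2 := by linarith
  have hsqrt :
      2 / (N * (N - 1 : ℝ)) * (∑ s, ∑ t ∈ Ioi s, √(P s t)) ^ 2 ≤ ∑ s, ∑ t ∈ Ioi s, P s t := by
    rw [div_mul_eq_mul_div, div_le_iff₀ (by nlinarith)]
    linarith
  show 1 / (2 * N - 2 : ℝ) * (∑ s, ∑ t ∈ Ioi s, D s t +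
    2 / (N * (N - 1 : ℝ)) * (∑ s, ∑ t ∈ Ioi s, √(P s t)) ^ 2) ≤ ∑ s, I s
  calc _ ≤ 1 / (2 * N - 2 : ℝ) * (∑ s, ∑ t ∈ Ioi s, D s t + ∑ s, ∑ t ∈ Ioi s, P s t) :=
        mul_le_mul_of_nonneg_left (by linarith) (one_div_pos.mpr hpos).le
    _ = ∑ s, I s := by rw [hpairs, ← mul_assoc, one_div_mul_cancel hpos.ne', one_mul]

theorem stmt_2 {d n N : ℕ} (hN : 2 ≤ N)
    (ρ : Matrix (Fin d) (Fin d) ℂ) (hρ : ρ.PosSemidef) (htr : ρ.trace = 1)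
    (K : Fin N → Fin n → Matrix (Fin d) (Fin d) ℂ)
    (hK : ∀ s, ∑ i, (K s i)ᴴ * K s i = 1)
    (π : Fin N → Equiv.Perm (Fin n)) :
    ∑ s, ∑ i, skewInfo hρ (K s i) ≥
      (1 / (2 * (N : ℝ) - 2)) *
        ((∑ s : Fin N, ∑ t ∈ Finset.Ioi s, ∑ i, skewInfo hρ (K s (π s i) - K t (π t i)))
          + (2 / ((N : ℝ) * ((N : ℝ) - 1))) *
            (∑ s : Fin N, ∑ t ∈ Finset.Ioi s,
              Real.sqrt (∑ i, skewInfo hρ (K s (π s i) + K t (π t i)))) ^ 2) :=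
  stmt_2_general hN ρ hρ K π
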